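/- Let n ≥ 1, η ∈ (0,1), α ∈ (0,n), and R ≥ 1. There exists a constant C = C(n, η, α) such that for every f with finite Hölder seminorm ‖f‖_{Ċ^η}, finite BMO seminorm, and support contained in the ball B(0,R), one has ‖f‖_{L^∞} ≤ C + C‖f‖_{BMO}(1 + log⁺[R^{n-α+η} + ‖f‖_{Ċ^η}]). -/

import Mathlib

/-!
Fix `x` and write `A ρ` for the average of `f` over `B(x, ρ)`. Hölder continuity gives
`|f x - A r| ≤ H r^η`; doubling the radius moves the average by at most `2^n ‖f‖_BMO`; and since
`|f| ≤ H (2R)^η` vanishes off `B(0, R)`, `|A ρ| ≤ H (2R)^η (R/ρ)^n`. With `r = (1 + H)^(-1/η)`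
and `ρ = 2^N r` for the least `N` making the last term at most `1`, the telescoping sum has
`N = O(1 + log (R^β + H))` terms for any `β > 0`, in particular `β = n - α + η`.
-/

open MeasureTheory Metric Real

open Module

section SetAverage

variable {α : Type*} [MeasurableSpace α] {μ : Measure α} {s t : Set α} {f : α → ℝ}

lemma setAverage_sub_const (hs₀ : μ s ≠ 0) (hs : μ s ≠ ⊤) (hf : IntegrableOn f s μ) (a : ℝ) :
    ⨍ y in s, (f y - a) ∂μ = ⨍ y in s, f y ∂μ - a := by
  have hμs : μ.real s ≠ 0 := ENNReal.toReal_pos hs₀ hs |>.ne'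
  rw [setAverage_eq, setAverage_eq, integral_sub hf (integrableOn_const hs), setIntegral_const,
    smul_eq_mul, smul_eq_mul, smul_eq_mul, mul_sub, inv_mul_cancel_left₀ hμs]

lemma setAverage_nonneg_of_nonneg (hf : ∀ y, 0 ≤ f y) : 0 ≤ ⨍ y in s, f y ∂μ := by
  rw [setAverage_eq, smul_eq_mul]
  exact mul_nonneg (inv_nonneg.2 measureReal_nonneg) (integral_nonneg hf)

lemma abs_setAverage_le_setAverage_abs (f : α → ℝ) :
    |⨍ y in s, f y ∂μ| ≤ ⨍ y in s, |f y| ∂μ := by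
  simp only [setAverage_eq, smul_eq_mul, abs_mul, abs_of_nonneg (inv_nonneg.2 measureReal_nonneg)]
  exact mul_le_mul_of_nonneg_left abs_integral_le_integral_abs (inv_nonneg.2 measureReal_nonneg)

lemma abs_sub_setAverage_le {a c : ℝ} (hs₀ : μ s ≠ 0) (hs : μ s ≠ ⊤)
    (hf : IntegrableOn f s μ) (h : ∀ y ∈ s, |a - f y| ≤ c) :
    |a - ⨍ y in s, f y ∂μ| ≤ c := by
  have hμs : 0 < μ.real s := ENNReal.toReal_pos hs₀ hs
  rw [abs_sub_comm, ← setAverage_sub_const hs₀ hs hf, setAverage_eq, smul_eq_mul, abs_mul,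
    abs_of_pos (inv_pos.2 hμs), inv_mul_le_iff₀ hμs, mul_comm]
  exact norm_setIntegral_le_of_norm_le_const (f := fun y => f y - a) hs.lt_top fun y hy => by
    rw [Real.norm_eq_abs, abs_sub_comm]; exact h y hy

lemma abs_setAverage_sub_setAverage_le (hst : s ⊆ t) (hs₀ : μ s ≠ 0) (ht : μ t ≠ ⊤)
    (hf : IntegrableOn f t μ) :
    |⨍ y in s, f y ∂μ - ⨍ y in t, f y ∂μ|
      ≤ μ.real t / μ.real s * ⨍ y in t, |f y - ⨍ w in t, f w ∂μ| ∂μ := by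
  set a := ⨍ w in t, f w ∂μ
  have hs : μ s ≠ ⊤ := ne_top_of_le_ne_top ht (measure_mono hst)
  have hμs : 0 < μ.real s := ENNReal.toReal_pos hs₀ hs
  have hμt : 0 < μ.real t := hμs.trans_le (measureReal_mono hst ht)
  calc |⨍ y in s, f y ∂μ - a| = |⨍ y in s, (f y - a) ∂μ| := by
        rw [setAverage_sub_const hs₀ hs (hf.mono_set hst)]
    _ ≤ (μ.real s)⁻¹ * ∫ y in s, |f y - a| ∂μ := by
        rw [← smul_eq_mul, ← setAverage_eq]; exact abs_setAverage_le_setAverage_abs _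
    _ ≤ (μ.real s)⁻¹ * ∫ y in t, |f y - a| ∂μ := by
        gcongr ?_ * ?_
        exact setIntegral_mono_set (hf.sub (integrableOn_const ht)).abs
          (Filter.Eventually.of_forall fun _ => abs_nonneg _) hst.eventuallyLE
    _ = μ.real t / μ.real s * ⨍ y in t, |f y - a| ∂μ := by
        rw [setAverage_eq, smul_eq_mul]; field_simp

lemma abs_setAverage_le_of_support_subset {M : ℝ} (ht : MeasurableSet t) (ht' : μ t ≠ ⊤)
    (hsupp : Function.support f ⊆ t) (hM : ∀ y, |f y| ≤ M) (hM₀ : 0 ≤ M) :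
    |⨍ y in s, f y ∂μ| ≤ M * μ.real t / μ.real s := by
  have hint : ∫ y in s, f y ∂μ = ∫ y in s ∩ t, f y ∂μ := by
    conv_lhs => rw [← Set.indicator_eq_self.2 hsupp]
    rw [integral_indicator ht, Measure.restrict_restrict ht, Set.inter_comm]
  have hst : μ (s ∩ t) < ⊤ := (measure_mono Set.inter_subset_right).trans_lt ht'.lt_top
  calc |⨍ y in s, f y ∂μ| = (μ.real s)⁻¹ * |∫ y in s ∩ t, f y ∂μ| := by
        rw [setAverage_eq, smul_eq_mul, abs_mul, abs_of_nonneg (inv_nonneg.2 measureReal_nonneg),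
          hint]
    _ ≤ (μ.real s)⁻¹ * (M * μ.real t) := by
        gcongr
        calc |∫ y in s ∩ t, f y ∂μ| ≤ M * μ.real (s ∩ t) :=
              norm_setIntegral_le_of_norm_le_const (f := f) hst fun y _ => hM y
          _ ≤ M * μ.real t := by gcongr; exact Set.inter_subset_right
    _ = M * μ.real t / μ.real s := by ring

end SetAverage

section Holder

variable {E : Type*} [NormedAddCommGroup E] {f : E → ℝ} {H η : ℝ}

lemma holderWith_of_abs_sub_le_mul_rpow (hH : 0 ≤ H) (hη : 0 ≤ η)
    (hf : ∀ x y, |f x - f y| ≤ H * ‖x - y‖ ^ η) : HolderWith H.toNNReal η.toNNReal f := by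
  intro x y
  calc edist (f x) (f y) = ENNReal.ofReal |f x - f y| := by rw [edist_dist, Real.dist_eq]
    _ ≤ ENNReal.ofReal (H * ‖x - y‖ ^ η) := ENNReal.ofReal_le_ofReal (hf x y)
    _ = H.toNNReal * edist x y ^ (η.toNNReal : ℝ) := by
        rw [ENNReal.ofReal_mul hH, edist_dist, dist_eq_norm, Real.coe_toNNReal η hη,
          ENNReal.ofReal_rpow_of_nonneg (norm_nonneg _) hη]
        rfl

lemma nonneg_of_abs_sub_le_mul_rpow [Nontrivial E] (hf : ∀ x y, |f x - f y| ≤ H * ‖x - y‖ ^ η) :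
    0 ≤ H := by
  obtain ⟨x, y, hxy⟩ := exists_pair_ne E
  have hpos : 0 < ‖x - y‖ ^ η := rpow_pos_of_pos (norm_pos_iff.2 (sub_ne_zero.2 hxy)) η
  exact (mul_nonneg_iff_of_pos_right hpos).1 ((abs_nonneg _).trans (hf x y))

lemma abs_le_of_abs_sub_le_mul_rpow_of_support_subset [NormedSpace ℝ E] [Nontrivial E] {z : E}
    {R : ℝ} (hH : 0 ≤ H) (hR : 0 ≤ R) (hf : ∀ x y, |f x - f y| ≤ H * ‖x - y‖ ^ η)
    (hsupp : Function.support f ⊆ ball z R) (y : E) : |f y| ≤ H * (2 * R) ^ η := by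
  by_cases hy : f y = 0
  · rw [hy, abs_zero]; positivity
  obtain ⟨e, he⟩ := exists_norm_eq E (by positivity : 0 ≤ 2 * R)
  have hfar : f (y + e) = 0 := by
    by_contra h
    have h₁ := mem_ball_iff_norm.1 (hsupp h)
    have h₂ := mem_ball_iff_norm.1 (hsupp hy)
    have : ‖e‖ ≤ ‖y + e - z‖ + ‖y - z‖ := by
      simpa using norm_sub_le (y + e - z) (y - z)
    linarith
  simpa [hfar, he] using hf y (y + e)

end Holder

lemma exists_nat_le_one_add_logb_of_le_two_pow {X : ℝ} (hX : 1 ≤ X) :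
    ∃ N : ℕ, X ≤ 2 ^ N ∧ (N : ℝ) ≤ 1 + logb 2 X := by
  refine ⟨⌈logb 2 X⌉₊, ?_, ?_⟩
  · calc X = 2 ^ logb 2 X := (rpow_logb two_pos (by norm_num) (by linarith)).symm
      _ ≤ 2 ^ (⌈logb 2 X⌉₊ : ℝ) := rpow_le_rpow_of_exponent_le one_le_two (Nat.le_ceil _)
      _ = 2 ^ ⌈logb 2 X⌉₊ := rpow_natCast _ _
  · linarith [Nat.ceil_lt_add_one (logb_nonneg one_lt_two hX)]

lemma mul_pow_le_one_of_mul_one_add_le_one {M q : ℝ} (hM : 0 ≤ M) (hq : 0 ≤ q)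
    (h : q * (1 + M) ≤ 1) {d : ℕ} (hd : d ≠ 0) : M * q ^ d ≤ 1 := by
  have hq₁ : q ≤ 1 := by nlinarith
  have := pow_le_of_le_one hq hq₁ hd
  nlinarith

lemma mul_one_add_mul_rpow_mul_rpow_le {η β R H : ℝ} (hη : η ∈ Set.Ioc 0 1) (hβ : 0 < β)
    (hR : 1 ≤ R) (hH : 0 ≤ H) :
    R * (1 + H * (2 * R) ^ η) * (1 + H) ^ η⁻¹
      ≤ 4 * (R ^ β + H) ^ (1 + (1 + η) / β + η⁻¹) := by
  obtain ⟨hη₀, hη₁⟩ := hη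
  set S := R ^ β + H
  have hS : 1 ≤ S := by linarith [one_le_rpow hR hβ.le]
  have hRS : R ≤ S ^ β⁻¹ := by
    calc R = (R ^ β) ^ β⁻¹ := (rpow_rpow_inv (by linarith) hβ.ne').symm
      _ ≤ S ^ β⁻¹ := by gcongr; linarith
  have h2R : (2 * R) ^ η ≤ 2 * S ^ (β⁻¹ * η) := by
    rw [mul_rpow zero_le_two (by linarith), rpow_mul (by linarith)]
    gcongr
    · calc (2 : ℝ) ^ η ≤ 2 ^ (1 : ℝ) := rpow_le_rpow_of_exponent_le one_le_two hη₁
        _ = 2 := rpow_one 2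
  have hmid : 1 + H * (2 * R) ^ η ≤ 3 * S ^ (1 + β⁻¹ * η) := by
    rw [rpow_add (by linarith), rpow_one]
    have h1 : 1 ≤ S * S ^ (β⁻¹ * η) :=
      one_le_mul_of_one_le_of_one_le hS (one_le_rpow hS (by positivity))
    have h2 : H * (2 * R) ^ η ≤ S * (2 * S ^ (β⁻¹ * η)) := by
      gcongr; linarith [one_le_rpow hR hβ.le]
    linarith
  have hH' : (1 + H) ^ η⁻¹ ≤ S ^ η⁻¹ := by
    gcongr; linarith [one_le_rpow hR hβ.le]
  calc R * (1 + H * (2 * R) ^ η) * (1 + H) ^ η⁻¹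
      ≤ S ^ β⁻¹ * (3 * S ^ (1 + β⁻¹ * η)) * S ^ η⁻¹ := by gcongr
    _ = 3 * S ^ (1 + (1 + η) / β + η⁻¹) := by
        rw [mul_left_comm, mul_assoc, ← rpow_add (by linarith), ← rpow_add (by linarith)]
        ring_nf
    _ ≤ 4 * S ^ (1 + (1 + η) / β + η⁻¹) := by gcongr; norm_num

section AddHaar

variable {E : Type*} [NormedAddCommGroup E] [NormedSpace ℝ E] [FiniteDimensional ℝ E]
  [MeasurableSpace E] [BorelSpace E] (μ : Measure E) [μ.IsAddHaarMeasure] {f : E → ℝ}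

lemma measureReal_ball_div_measureReal_ball (x y : E) {r s : ℝ} (hr : 0 < r) (hs : 0 < s) :
    μ.real (ball y s) / μ.real (ball x r) = (s / r) ^ finrank ℝ E := by
  have hμ₁ : 0 < μ.real (ball (0 : E) 1) :=
    ENNReal.toReal_pos (measure_ball_pos μ _ one_pos).ne' measure_ball_lt_top.ne
  rw [measureReal_def, measureReal_def, Measure.addHaar_ball_of_pos μ y hs,
    Measure.addHaar_ball_of_pos μ x hr,
    ENNReal.toReal_mul, ENNReal.toReal_mul, ENNReal.toReal_ofReal (by positivity),
    ENNReal.toReal_ofReal (by positivity), ← measureReal_def, div_pow]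
  field_simp

lemma abs_setAverage_ball_sub_setAverage_ball_two_mul_le (hf : LocallyIntegrable f μ) (x : E)
    {r : ℝ} (hr : 0 < r) :
    |⨍ y in ball x r, f y ∂μ - ⨍ y in ball x (2 * r), f y ∂μ|
      ≤ 2 ^ finrank ℝ E * ⨍ y in ball x (2 * r), |f y - ⨍ w in ball x (2 * r), f w ∂μ| ∂μ := by
  have h := abs_setAverage_sub_setAverage_le (ball_subset_ball (by linarith : r ≤ 2 * r))
    (measure_ball_pos μ x hr).ne' measure_ball_lt_top.ne
    ((hf.integrableOn_isCompact (isCompact_closedBall x (2 * r))).mono_set ball_subset_closedBall)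
  rwa [measureReal_ball_div_measureReal_ball μ x x hr (by positivity),
    mul_div_cancel_right₀ _ hr.ne'] at h

lemma abs_setAverage_ball_sub_setAverage_ball_two_pow_mul_le (hf : LocallyIntegrable f μ)
    {B : ℝ} (x : E) (hB : ∀ r, 0 < r → ⨍ y in ball x r, |f y - ⨍ w in ball x r, f w ∂μ| ∂μ ≤ B)
    {r : ℝ} (hr : 0 < r) (N : ℕ) :
    |⨍ y in ball x r, f y ∂μ - ⨍ y in ball x (2 ^ N * r), f y ∂μ|
      ≤ N * (2 ^ finrank ℝ E * B) := by
  have h := dist_le_range_sum_of_dist_le (f := fun k : ℕ => ⨍ y in ball x (2 ^ k * r), f y ∂μ) N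
    (d := fun _ => 2 ^ finrank ℝ E * B) fun {k} _ => by
      have hk : (2 : ℝ) ^ (k + 1) * r = 2 * (2 ^ k * r) := by ring
      rw [Real.dist_eq, hk]
      exact (abs_setAverage_ball_sub_setAverage_ball_two_mul_le μ hf x (by positivity)).trans
        (by gcongr; exact hB _ (by positivity))
  simpa [Real.dist_eq] using h

lemma abs_le_add_bmo_add_tail (hf : LocallyIntegrable f μ) {x z : E} {r R c B M : ℝ}
    (hr : 0 < r) (hR : 0 < R) (hfx : ∀ y ∈ ball x r, |f x - f y| ≤ c)
    (hB : ∀ ρ, 0 < ρ → ⨍ y in ball x ρ, |f y - ⨍ w in ball x ρ, f w ∂μ| ∂μ ≤ B)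
    (hsupp : Function.support f ⊆ ball z R) (hM : ∀ y, |f y| ≤ M) (hM₀ : 0 ≤ M) (N : ℕ) :
    |f x| ≤ c + N * (2 ^ finrank ℝ E * B) + M * (R / (2 ^ N * r)) ^ finrank ℝ E := by
  set A : ℝ → ℝ := fun ρ => ⨍ y in ball x ρ, f y ∂μ
  have hfar : |A (2 ^ N * r)| ≤ M * (R / (2 ^ N * r)) ^ finrank ℝ E := by
    rw [← measureReal_ball_div_measureReal_ball μ x z (by positivity) hR, ← mul_div_assoc]
    exact abs_setAverage_le_of_support_subset measurableSet_ball measure_ball_lt_top.ne hsupp hM hM₀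
  calc |f x| ≤ |f x - A r| + |A r - A (2 ^ N * r)| + |A (2 ^ N * r)| := by
        simpa using (norm_add₃_le : ‖(f x - A r) + (A r - A (2 ^ N * r)) + A (2 ^ N * r)‖ ≤ _)
    _ ≤ c + N * (2 ^ finrank ℝ E * B) + M * (R / (2 ^ N * r)) ^ finrank ℝ E := by
        gcongr
        · exact abs_sub_setAverage_le (measure_ball_pos μ x hr).ne' measure_ball_lt_top.ne
            ((hf.integrableOn_isCompact (isCompact_closedBall x r)).mono_set
              ball_subset_closedBall) hfx
        · exact abs_setAverage_ball_sub_setAverage_ball_two_pow_mul_le μ hf x hB hr N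

theorem exists_abs_le_two_add_mul_bmo_of_holder [Nontrivial E] {η β H B R : ℝ} {z : E}
    (hη : η ∈ Set.Ioc 0 1) (hβ : 0 < β) (hR : 1 ≤ R)
    (hf : ∀ x y, |f x - f y| ≤ H * ‖x - y‖ ^ η)
    (hB : ∀ x r, 0 < r → ⨍ y in ball x r, |f y - ⨍ w in ball x r, f w ∂μ| ∂μ ≤ B)
    (hsupp : Function.support f ⊆ ball z R) (x : E) :
    ∃ N : ℕ, (N : ℝ) ≤ 3 + (1 + (1 + η) / β + η⁻¹) * logb 2 (R ^ β + H) ∧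
      |f x| ≤ 2 + N * (2 ^ finrank ℝ E * B) := by
  obtain ⟨hη₀, hη₁⟩ := hη
  have hH := nonneg_of_abs_sub_le_mul_rpow hf
  set M := H * (2 * R) ^ η
  have hM₀ : 0 ≤ M := mul_nonneg hH (rpow_nonneg (by linarith) η)
  have hloc : LocallyIntegrable f μ :=
    ((holderWith_of_abs_sub_le_mul_rpow hH hη₀.le hf).continuous
      (by simpa using hη₀)).locallyIntegrable
  -- `p⁻¹` is the radius at which the Hölder oscillation `H * p⁻¹ ^ η` drops below `1`
  set p := (1 + H) ^ η⁻¹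
  have hp : 1 ≤ p := one_le_rpow (by linarith) (inv_nonneg.2 hη₀.le)
  have hrη : p⁻¹ ^ η = (1 + H)⁻¹ := by
    rw [inv_rpow (by positivity), rpow_inv_rpow (by positivity) hη₀.ne']
  -- after `N` doublings the radius exceeds `R * (1 + M)`, so the tail term is at most `1`
  obtain ⟨N, hXN, hN⟩ := exists_nat_le_one_add_logb_of_le_two_pow
    (X := R * (1 + M) * p) (one_le_mul_of_one_le_of_one_le
      (one_le_mul_of_one_le_of_one_le hR (by linarith)) hp)
  refine ⟨N, ?_, ?_⟩
  · have hS : 0 < R ^ β + H := by linarith [one_le_rpow hR hβ.le]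
    calc (N : ℝ) ≤ 1 + logb 2 (R * (1 + M) * p) := hN
      _ ≤ 1 + logb 2 (4 * (R ^ β + H) ^ (1 + (1 + η) / β + η⁻¹)) := by
          gcongr 1 + logb 2 ?_
          · exact one_lt_two
          · exact mul_one_add_mul_rpow_mul_rpow_le ⟨hη₀, hη₁⟩ hβ hR hH
      _ = 3 + (1 + (1 + η) / β + η⁻¹) * logb 2 (R ^ β + H) := by
          rw [logb_mul (by norm_num) (by positivity), logb_rpow_eq_mul_logb_of_pos hS,
            show (4 : ℝ) = 2 ^ (2 : ℝ) by norm_num, logb_rpow two_pos (by norm_num)]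
          ring
  · have hfx : ∀ y ∈ ball x p⁻¹, |f x - f y| ≤ H * p⁻¹ ^ η := fun y hy =>
      (hf x y).trans (by gcongr; exact (mem_ball_iff_norm'.1 hy).le)
    have hmain := abs_le_add_bmo_add_tail μ hloc (by positivity) (by linarith) hfx (hB x) hsupp
      (abs_le_of_abs_sub_le_mul_rpow_of_support_subset hH (by linarith) hf hsupp) hM₀ N
    have hnear : H * p⁻¹ ^ η ≤ 1 := by
      rw [hrη, ← div_eq_mul_inv, div_le_one (by linarith)]; linarith
    have hfar : M * (R / (2 ^ N * p⁻¹)) ^ finrank ℝ E ≤ 1 := by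
      refine mul_pow_le_one_of_mul_one_add_le_one hM₀ (by positivity) ?_ finrank_pos.ne'
      rw [div_mul_eq_mul_div, div_le_one (by positivity), ← div_eq_mul_inv,
        le_div_iff₀ (by positivity)]
      exact hXN
    linarith

end AddHaar

/-- BGW inequality with BMO for compactly supported functions:
`‖f‖_∞ ≤ C + C‖f‖_BMO (1 + log⁺[R^{n-α+η} + ‖f‖_{Ċ^η}])`. -/
theorem BGW_BMO_compact_support (n : ℕ) (hn : 1 ≤ n) (η α R : ℝ)
    (hη : η ∈ Set.Ioo (0 : ℝ) 1) (hα : α ∈ Set.Ioo (0 : ℝ) (n : ℝ)) (hR : 1 ≤ R) :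
    ∃ C : ℝ, 0 < C ∧
      ∀ (f : EuclideanSpace ℝ (Fin n) → ℝ) (Hη B : ℝ),
        (∀ x y, |f x - f y| ≤ Hη * ‖x - y‖ ^ η) →
        (∀ (z : EuclideanSpace ℝ (Fin n)) (r : ℝ), 0 < r →
          ⨍ x in ball z r, |f x - ⨍ y in ball z r, f y ∂volume| ∂volume ≤ B) →
        Function.support f ⊆ ball (0 : EuclideanSpace ℝ (Fin n)) R →
        ∀ x, |f x| ≤ C + C * B
            * (1 + max (Real.log (R ^ ((n : ℝ) - α + η) + Hη)) 0) := by
  have : Nonempty (Fin n) := ⟨⟨0, hn⟩⟩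
  set β := (n : ℝ) - α + η
  have hβ : 0 < β := by linarith [hα.2, hη.1]
  set K := (1 + (1 + η) / β + η⁻¹) / log 2
  have hK : 0 ≤ K := div_nonneg (by have := hη.1; positivity) (log_nonneg one_le_two)
  refine ⟨2 ^ n * (3 + K), mul_pos (by positivity) (by linarith), fun f H B hf hB hsupp x => ?_⟩
  obtain ⟨N, hN, hfx⟩ := exists_abs_le_two_add_mul_bmo_of_holder volume ⟨hη.1, hη.2.le⟩ hβ hR
    hf hB hsupp x
  rw [finrank_euclideanSpace_fin] at hfx
  set L := log (R ^ β + H)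
  replace hN : (N : ℝ) ≤ 3 + K * L := by rwa [← log_div_log, mul_div_left_comm, mul_comm L] at hN
  have hL : 0 ≤ L :=
    log_nonneg (by linarith [one_le_rpow hR hβ.le, nonneg_of_abs_sub_le_mul_rpow hf])
  have hB₀ : 0 ≤ B :=
    (setAverage_nonneg_of_nonneg fun _ => abs_nonneg _).trans (hB x 1 one_pos)
  have h2n : (1 : ℝ) ≤ 2 ^ n := one_le_pow₀ one_le_two
  rw [max_eq_left hL]
  calc |f x| ≤ 2 + N * (2 ^ n * B) := hfx
    _ ≤ 2 ^ n * (3 + K) + (3 + K) * (1 + L) * (2 ^ n * B) := by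
        gcongr ?_ + ?_ * _
        · nlinarith
        · nlinarith
    _ = 2 ^ n * (3 + K) + 2 ^ n * (3 + K) * B * (1 + L) := by ring
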